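/- If W is conditionally independent of Y given (Z, X), then there exists a function φ of (X, Z) taking values in a scalar space such that W is conditionally independent of Y given (φ(X,Z), X). In particular, for discrete random variables one may take φ(x,z) = P(Y = 1 | X = x, Z = z) when Y is binary. -/

import Mathlib

open Finset

attribute [local instance] Classical.propDecidable

/-- Probability of an event on a finite outcome space. -/
noncomputable def Pr {Ω : Type*} [Fintype Ω] (p : Ω → ℝ) (E : Ω → Prop) : ℝ :=
  ∑ ω, if E ω then p ω else 0

/-- Conditional probability `P(E | F)`. -/
noncomputable def condPr {Ω : Type*} [Fintype Ω] (p : Ω → ℝ) (E F : Ω → Prop) : ℝ :=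
  Pr p (fun ω => E ω ∧ F ω) / Pr p F

/-- Conditional independence of `A` and `B` given `S`, via factorization of the joint law. -/
def CondIndepOn {Ω α β γ : Type*} [Fintype Ω] (p : Ω → ℝ)
    (A : Ω → α) (B : Ω → β) (S : Ω → γ) : Prop :=
  ∀ a b s,
    Pr p (fun ω => A ω = a ∧ B ω = b ∧ S ω = s) * Pr p (fun ω => S ω = s) =
    Pr p (fun ω => A ω = a ∧ S ω = s) * Pr p (fun ω => B ω = b ∧ S ω = s)

/-! Conditioning on `S = (Z, X)`, independence of `W` and `Y` says that inside each cell
`S = s` the event `Y = b` has the same proportion `P(Y = b | S = s)` of every event `W = a`.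
If this proportion depends on `s` only through a coarser variable `T = f S`, summing over the
cells of a fibre `T = t` keeps it, which is independence given `T`. For binary `Y`,
`T = (P(Y = 1 | X, Z), X)` is such a coarsening: the proportion is `T.1` or `1 - T.1`. -/

section Pr

variable {Ω : Type*} [Fintype Ω] (p : Ω → ℝ)

lemma Pr_congr {E F : Ω → Prop} (h : ∀ ω, E ω ↔ F ω) : Pr p E = Pr p F :=
  Finset.sum_congr rfl fun ω _ => if_congr (h ω) rfl rfl

lemma Pr_false : Pr p (fun _ => False) = 0 := by
  simp [Pr]

lemma Pr_nonneg (hp : ∀ ω, 0 ≤ p ω) (E : Ω → Prop) : 0 ≤ Pr p E :=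
  Finset.sum_nonneg fun ω _ => by split_ifs <;> simp [hp ω]

lemma Pr_mono (hp : ∀ ω, 0 ≤ p ω) {E F : Ω → Prop} (h : ∀ ω, E ω → F ω) :
    Pr p E ≤ Pr p F :=
  Finset.sum_le_sum fun ω _ => by
    by_cases hE : E ω <;> by_cases hF : F ω <;> simp_all

lemma Pr_and_eq_zero (hp : ∀ ω, 0 ≤ p ω) (E : Ω → Prop) {F : Ω → Prop}
    (hF : Pr p F = 0) : Pr p (fun ω => E ω ∧ F ω) = 0 :=
  le_antisymm (hF ▸ Pr_mono p hp fun _ h => h.2) (Pr_nonneg p hp _)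

lemma Pr_and_add_Pr_not_and (E F : Ω → Prop) :
    Pr p (fun ω => E ω ∧ F ω) + Pr p (fun ω => ¬E ω ∧ F ω) = Pr p F := by
  simp only [Pr, ← Finset.sum_add_distrib]
  refine Finset.sum_congr rfl fun ω _ => ?_
  by_cases hE : E ω <;> by_cases hF : F ω <;> simp [hE, hF]

lemma Pr_eq_sum_Pr_and_eq {σ : Type*} (S : Ω → σ) (E : Ω → Prop) :
    Pr p E = ∑ s ∈ univ.image S, Pr p (fun ω => E ω ∧ S ω = s) := by
  simp only [Pr]
  rw [Finset.sum_comm]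
  refine Finset.sum_congr rfl fun ω _ => ?_
  by_cases hE : E ω <;> simp [hE]

lemma Pr_eq_mul_of_forall_and_eq {σ : Type*} (S : Ω → σ) {E F : Ω → Prop} {c : ℝ}
    (h : ∀ s, Pr p (fun ω => E ω ∧ S ω = s) = c * Pr p (fun ω => F ω ∧ S ω = s)) :
    Pr p E = c * Pr p F := by
  rw [Pr_eq_sum_Pr_and_eq p S E, Pr_eq_sum_Pr_and_eq p S F, Finset.mul_sum]
  exact Finset.sum_congr rfl fun s _ => h s

lemma Pr_and_comp_eq_mul {σ τ : Type*} (S : Ω → σ) (f : σ → τ) (t : τ) {E F : Ω → Prop}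
    {c : ℝ} (h : ∀ s, f s = t →
      Pr p (fun ω => E ω ∧ S ω = s) = c * Pr p (fun ω => F ω ∧ S ω = s)) :
    Pr p (fun ω => E ω ∧ f (S ω) = t) = c * Pr p (fun ω => F ω ∧ f (S ω) = t) := by
  refine Pr_eq_mul_of_forall_and_eq p S fun s => ?_
  by_cases hs : f s = t
  · have fiber : ∀ G : Ω → Prop, Pr p (fun ω => (G ω ∧ f (S ω) = t) ∧ S ω = s) =
        Pr p (fun ω => G ω ∧ S ω = s) := fun G =>
      Pr_congr p fun ω => ⟨fun h => ⟨h.1.1, h.2⟩, fun h => ⟨⟨h.1, h.2 ▸ hs⟩, h.2⟩⟩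
    rw [fiber, fiber, h s hs]
  · have empty : ∀ G : Ω → Prop, Pr p (fun ω => (G ω ∧ f (S ω) = t) ∧ S ω = s) = 0 := fun G =>
      (Pr_congr p fun ω => iff_false_intro fun ⟨⟨_, hω⟩, hωs⟩ => hs (hωs ▸ hω)).trans (Pr_false p)
    rw [empty, empty, mul_zero]

lemma Pr_eq_and_of_fin_two (hp : ∀ ω, 0 ≤ p ω) (Y : Ω → Fin 2) (F : Ω → Prop) (b : Fin 2) :
    Pr p (fun ω => Y ω = b ∧ F ω) =
      (if b = 1 then condPr p (fun ω => Y ω = 1) F else 1 - condPr p (fun ω => Y ω = 1) F) *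
        Pr p F := by
  by_cases hF : Pr p F = 0
  · rw [hF, mul_zero]
    exact Pr_and_eq_zero p hp _ hF
  have hY1 : Pr p (fun ω => Y ω = 1 ∧ F ω) = condPr p (fun ω => Y ω = 1) F * Pr p F :=
    (div_mul_cancel₀ _ hF).symm
  fin_cases b
  · have hY0 : Pr p (fun ω => Y ω = 0 ∧ F ω) = Pr p (fun ω => ¬Y ω = 1 ∧ F ω) :=
      Pr_congr p fun ω => and_congr_left' (by omega)
    have := Pr_and_add_Pr_not_and p (fun ω => Y ω = 1) F
    simp only [Fin.zero_eta, Fin.isValue, zero_ne_one, if_false, hY0]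
    linarith
  · simpa using hY1

end Pr

theorem CondIndepOn.comp_of_Pr_and_eq_mul {Ω α β σ τ : Type*} [Fintype Ω] {p : Ω → ℝ}
    (hp : ∀ ω, 0 ≤ p ω) {A : Ω → α} {B : Ω → β} {S : Ω → σ} (h : CondIndepOn p A B S)
    (f : σ → τ) (g : β → τ → ℝ)
    (hg : ∀ b s, Pr p (fun ω => B ω = b ∧ S ω = s) = g b (f s) * Pr p (fun ω => S ω = s)) :
    CondIndepOn p A B (fun ω => f (S ω)) := by
  intro a b t
  have hA : ∀ s, Pr p (fun ω => A ω = a ∧ B ω = b ∧ S ω = s) =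
      g b (f s) * Pr p (fun ω => A ω = a ∧ S ω = s) := by
    intro s
    by_cases hs : Pr p (fun ω => S ω = s) = 0
    · rw [Pr_and_eq_zero p hp _ (Pr_and_eq_zero p hp _ hs), Pr_and_eq_zero p hp _ hs, mul_zero]
    · apply mul_right_cancel₀ hs
      rw [h a b s, hg b s]
      ring
  have hAB : Pr p (fun ω => A ω = a ∧ B ω = b ∧ f (S ω) = t) =
      g b t * Pr p (fun ω => A ω = a ∧ f (S ω) = t) := by
    have := Pr_and_comp_eq_mul p S f t (E := fun ω => A ω = a ∧ B ω = b) (c := g b t)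
      fun s hs => by simpa only [and_assoc, hs] using hA s
    simpa only [and_assoc] using this
  have hB : Pr p (fun ω => B ω = b ∧ f (S ω) = t) = g b t * Pr p (fun ω => f (S ω) = t) := by
    have := Pr_and_comp_eq_mul p S f t (E := fun ω => B ω = b) (F := fun _ => True) (c := g b t)
      fun s hs => by simpa only [true_and, hs] using hg b s
    simpa only [true_and] using this
  rw [hAB, hB]
  ring

theorem stmt0_general {Ω 𝓦 𝓧 𝓩 : Type*} [Fintype Ω]
    (p : Ω → ℝ) (hp : ∀ ω, 0 ≤ p ω)
    (W : Ω → 𝓦) (X : Ω → 𝓧) (Z : Ω → 𝓩) (Y : Ω → Fin 2)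
    (h : CondIndepOn p W Y (fun ω => (Z ω, X ω))) :
    (∃ φ : 𝓧 → 𝓩 → ℝ, CondIndepOn p W Y (fun ω => (φ (X ω) (Z ω), X ω))) ∧
      CondIndepOn p W Y
        (fun ω =>
          (condPr p (fun ω' => Y ω' = 1) (fun ω' => X ω' = X ω ∧ Z ω' = Z ω), X ω)) := by
  let φ : 𝓧 → 𝓩 → ℝ := fun x z => condPr p (fun ω => Y ω = 1) (fun ω => X ω = x ∧ Z ω = z)
  have hφ : CondIndepOn p W Y (fun ω => (φ (X ω) (Z ω), X ω)) := by
    refine h.comp_of_Pr_and_eq_mul hp (fun s => (φ s.2 s.1, s.2))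
      (fun b r => if b = 1 then r.1 else 1 - r.1) fun b ⟨z, x⟩ => ?_
    have hS : ∀ ω, (Z ω, X ω) = (z, x) ↔ X ω = x ∧ Z ω = z := by simp [and_comm]
    rw [Pr_congr p fun ω => and_congr_right' (hS ω), Pr_congr p hS]
    exact Pr_eq_and_of_fin_two p hp Y _ b
  exact ⟨⟨φ, hφ⟩, hφ⟩

/-- If `W ⟂ Y | (Z, X)` on a finite probability space with binary `Y`,
then there is a scalar-valued function `φ` of `(X, Z)` with `W ⟂ Y | (φ(X,Z), X)`;
in particular one may take `φ x z = P(Y = 1 | X = x, Z = z)`. -/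
theorem stmt0 {Ω 𝓦 𝓧 𝓩 : Type*} [Fintype Ω] [Fintype 𝓧] [Fintype 𝓩]
    (p : Ω → ℝ) (hp : ∀ ω, 0 ≤ p ω) (hsum : ∑ ω, p ω = 1)
    (W : Ω → 𝓦) (X : Ω → 𝓧) (Z : Ω → 𝓩) (Y : Ω → Fin 2)
    (h : CondIndepOn p W Y (fun ω => (Z ω, X ω))) :
    (∃ φ : 𝓧 → 𝓩 → ℝ, CondIndepOn p W Y (fun ω => (φ (X ω) (Z ω), X ω))) ∧
      CondIndepOn p W Y
        (fun ω =>
          (condPr p (fun ω' => Y ω' = 1) (fun ω' => X ω' = X ω ∧ Z ω' = Z ω), X ω)) :=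
  stmt0_general p hp W X Z Y h
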